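/- Let Π ∈ Π_{q,r} and W ∈ ℝ^{q×p}. Then Z_r(Π)·W ⊆ Z_r(Π_W), where Z_r(Π)·W := { ZW : Z ∈ Z_r(Π) }. If, in addition, at least one of the following holds: (a) W has full column rank, or (b) Π₂₂ is nonsingular, then Z_r(Π)·W = Z_r(Π_W). -/

import Mathlib

open Matrix
open scoped Classical

/-- The Moore–Penrose pseudoinverse of a real matrix, defined via its four
characterizing Penrose conditions (which determine it uniquely). -/
noncomputable def pinv {m n : ℕ} (A : Matrix (Fin m) (Fin n) ℝ) : Matrix (Fin n) (Fin m) ℝ :=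
  if h : ∃ B : Matrix (Fin n) (Fin m) ℝ,
      A * B * A = A ∧ B * A * B = B ∧ (A * B)ᵀ = A * B ∧ (B * A)ᵀ = B * A
  then h.choose else 0

/-- The unique positive semidefinite square root of a positive semidefinite matrix
(defined by its characterizing property, which determines it uniquely). -/
noncomputable def msqrt {n : ℕ} (A : Matrix (Fin n) (Fin n) ℝ) : Matrix (Fin n) (Fin n) ℝ :=
  if h : ∃ B : Matrix (Fin n) (Fin n) ℝ, B.PosSemidef ∧ B * B = A then h.choose else 0

/-- The quadratic matrix expression `[I; Z]ᵀ Π [I; Z]`. -/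
noncomputable def qmi {q r : ℕ} (P : Matrix (Fin q ⊕ Fin r) (Fin q ⊕ Fin r) ℝ)
    (Z : Matrix (Fin r) (Fin q) ℝ) : Matrix (Fin q) (Fin q) ℝ :=
  (fromRows (1 : Matrix (Fin q) (Fin q) ℝ) Z)ᵀ * P * fromRows 1 Z

/-- The solution set `Z_r(Π)` of the nonstrict QMI. -/
def ZrSet {q r : ℕ} (P : Matrix (Fin q ⊕ Fin r) (Fin q ⊕ Fin r) ℝ) :
    Set (Matrix (Fin r) (Fin q) ℝ) := {Z | (qmi P Z).PosSemidef}

/-- The solution set `Z_r⁺(Π)` of the strict QMI. -/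
def ZrPlusSet {q r : ℕ} (P : Matrix (Fin q ⊕ Fin r) (Fin q ⊕ Fin r) ℝ) :
    Set (Matrix (Fin r) (Fin q) ℝ) := {Z | (qmi P Z).PosDef}

/-- The solution set `Z_r⁰(Π)` of the quadratic matrix equality. -/
def ZrZeroSet {q r : ℕ} (P : Matrix (Fin q ⊕ Fin r) (Fin q ⊕ Fin r) ℝ) :
    Set (Matrix (Fin r) (Fin q) ℝ) := {Z | qmi P Z = 0}

/-- Generalized Schur complement `Π|Π₂₂ = Π₁₁ − Π₁₂ Π₂₂^† Π₂₁`. -/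
noncomputable def schurC {q r : ℕ} (P : Matrix (Fin q ⊕ Fin r) (Fin q ⊕ Fin r) ℝ) :
    Matrix (Fin q) (Fin q) ℝ :=
  P.toBlocks₁₁ - P.toBlocks₁₂ * pinv P.toBlocks₂₂ * P.toBlocks₂₁

/-- Membership in the class `Π_{q,r}`: symmetric, `Π₂₂ ⪯ 0`, `Π|Π₂₂ ⪰ 0`,
and `ker Π₂₂ ⊆ ker Π₁₂`. -/
def memPi {q r : ℕ} (P : Matrix (Fin q ⊕ Fin r) (Fin q ⊕ Fin r) ℝ) : Prop :=
  P.IsSymm ∧ (-P.toBlocks₂₂).PosSemidef ∧ (schurC P).PosSemidef ∧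
    ∀ x : Fin r → ℝ, P.toBlocks₂₂ *ᵥ x = 0 → P.toBlocks₁₂ *ᵥ x = 0

/-!
Completing the square in `Z`: with `G = Π₂₂^†`, the kernel condition gives `Π₁₂ G Π₂₂ = Π₁₂`, hence
`[I; Z]ᵀ Π [I; Z] = Π|Π₂₂ + (Z + G Π₂₁)ᵀ Π₂₂ (Z + G Π₂₁)`. The same identity holds for `Π_W`, with
Schur complement `Wᵀ (Π|Π₂₂) W` and `Π₂₁ W` in place of `Π₂₁`. The inclusion `Z_r(Π) W ⊆ Z_r(Π_W)`
is the congruence `[I; ZW]ᵀ Π_W [I; ZW] = Wᵀ [I; Z]ᵀ Π [I; Z] W`.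

Conversely, write `Π|Π₂₂ = TᵀT` and `-Π₂₂ = LᵀL`. For `Y ∈ Z_r(Π_W)` with shifted `Ỹ = Y + G Π₂₁ W`
this says `(LỸ)ᵀ(LỸ) ⪯ (TW)ᵀ(TW)`, so by Douglas' lemma `LỸ = K T W` for a contraction `K` whose
range lies in that of `L`. Any `V` with `V W = Ỹ` and `L V = K T` then satisfies
`Π|Π₂₂ + Vᵀ Π₂₂ V = Tᵀ (1 - KᵀK) T ⪰ 0`, and `Z = V - G Π₂₁` solves the original inequality.
Such a `V` exists when `L` is invertible (`V = L⁻¹ K T`) or when `W` has a left inverse `W⁺`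
(`V = L^† K T + (1 - L^† L) Ỹ W⁺`).
-/

section PenroseInverse

variable {m n : Type*} [Fintype m] [Fintype n]

structure IsPenroseInverse (A : Matrix m n ℝ) (B : Matrix n m ℝ) : Prop where
  mul_pinv_mul : A * B * A = A
  pinv_mul_pinv : B * A * B = B
  transpose_mul_pinv : (A * B)ᵀ = A * B
  transpose_pinv_mul : (B * A)ᵀ = B * A

namespace IsPenroseInverse

variable {A : Matrix m n ℝ} {B C : Matrix n m ℝ}

theorem transpose (h : IsPenroseInverse A B) : IsPenroseInverse Aᵀ Bᵀ where
  mul_pinv_mul := by rw [← transpose_mul, ← transpose_mul, ← Matrix.mul_assoc, h.mul_pinv_mul]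
  pinv_mul_pinv := by rw [← transpose_mul, ← transpose_mul, ← Matrix.mul_assoc, h.pinv_mul_pinv]
  transpose_mul_pinv := by rw [← transpose_mul, transpose_transpose, h.transpose_pinv_mul]
  transpose_pinv_mul := by rw [← transpose_mul, transpose_transpose, h.transpose_mul_pinv]

theorem eq (hB : IsPenroseInverse A B) (hC : IsPenroseInverse A C) : B = C := by
  have hAB : A * B = A * C :=
    calc A * B = A * C * A * B := by rw [hC.mul_pinv_mul]
      _ = (A * C)ᵀ * (A * B)ᵀ := by
        rw [hC.transpose_mul_pinv, hB.transpose_mul_pinv, Matrix.mul_assoc]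
      _ = (A * B * A * C)ᵀ := by rw [← transpose_mul, Matrix.mul_assoc (A * B)]
      _ = A * C := by rw [hB.mul_pinv_mul, hC.transpose_mul_pinv]
  have hBA : B * A = C * A :=
    calc B * A = B * (A * C * A) := by rw [hC.mul_pinv_mul]
      _ = (B * A)ᵀ * (C * A)ᵀ := by
        rw [hB.transpose_pinv_mul, hC.transpose_pinv_mul, Matrix.mul_assoc, Matrix.mul_assoc]
      _ = (C * (A * B * A))ᵀ := by rw [← transpose_mul]; simp only [Matrix.mul_assoc]
      _ = C * A := by rw [hB.mul_pinv_mul, hC.transpose_pinv_mul]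
  calc B = B * A * B := hB.pinv_mul_pinv.symm
    _ = C * A * C := by rw [Matrix.mul_assoc, hAB, ← Matrix.mul_assoc, hBA]
    _ = C := hC.pinv_mul_pinv

theorem transpose_eq_of_isSymm {A B : Matrix n n ℝ} (h : IsPenroseInverse A B) (hA : A.IsSymm) :
    Bᵀ = B :=
  (hA.eq ▸ h.transpose).eq h

end IsPenroseInverse

theorem isPenroseInverse_cfc_inv [DecidableEq n] {A : Matrix n n ℝ} (hA : A.IsHermitian) :
    IsPenroseInverse A (cfc (·⁻¹ : ℝ → ℝ) A) := by
  have hmul (f g : ℝ → ℝ) : cfc (fun x => f x * g x) A = cfc f A * cfc g A :=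
    cfc_mul f g A (finite_real_spectrum.continuousOn f) (finite_real_spectrum.continuousOn g)
  have hid : cfc (fun x : ℝ => x) A = A := cfc_id' ℝ A hA.isSelfAdjoint
  have hsymm (f : ℝ → ℝ) : (cfc f A)ᵀ = cfc f A := IsSelfAdjoint.cfc.isHermitian
  refine ⟨?_, ?_, ?_, ?_⟩
  · conv_rhs => rw [← hid, ← funext fun x : ℝ => mul_inv_mul_cancel x]
    rw [hmul, hmul, hid]
  · have hinv (x : ℝ) : x⁻¹ * x * x⁻¹ = x⁻¹ := by simpa using mul_inv_mul_cancel x⁻¹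
    conv_rhs => rw [← funext hinv]
    rw [hmul, hmul, hid]
  · simpa only [hmul, hid] using hsymm fun x => x * x⁻¹
  · simpa only [hmul, hid] using hsymm fun x => x⁻¹ * x

end PenroseInverse

theorem Matrix.PosSemidef.transpose_mul_mul_same {m n : Type*} [Fintype m] [Fintype n]
    {A : Matrix m m ℝ} (hA : A.PosSemidef) (B : Matrix m n ℝ) : (Bᵀ * A * B).PosSemidef := by
  simpa using hA.conjTranspose_mul_mul_same B

theorem mul_mul_eq_of_ker_le {k m n : Type*} [Fintype k] [Fintype n] {D : Matrix k n ℝ}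
    {G : Matrix n k ℝ} {B : Matrix m n ℝ} (hG : D * G * D = D)
    (hker : ∀ x, D *ᵥ x = 0 → B *ᵥ x = 0) : B * G * D = B := by
  refine ext_iff_mulVec.mpr fun x => ?_
  have hx : D *ᵥ (x - (G * D) *ᵥ x) = 0 := by
    rw [mulVec_sub, mulVec_mulVec, ← Matrix.mul_assoc, hG, sub_self]
  rw [eq_comm, ← sub_eq_zero, ← hker _ hx, mulVec_sub, mulVec_mulVec, Matrix.mul_assoc]

section Extension

variable {k m n : Type*} [Fintype k] [Fintype m] [Fintype n]

theorem mulVec_eq_zero_of_posSemidef_sub {C : Matrix n n ℝ} {A : Matrix k n ℝ}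
    (h : (C - Aᵀ * A).PosSemidef) {x : n → ℝ} (hx : C *ᵥ x = 0) : A *ᵥ x = 0 := by
  have hnonneg := h.dotProduct_mulVec_nonneg x
  rw [star_trivial, sub_mulVec, dotProduct_sub, hx, ← mulVec_mulVec, dotProduct_mulVec,
    vecMul_transpose, dotProduct_zero, zero_sub, neg_nonneg] at hnonneg
  exact dotProduct_self_eq_zero.mp
    (hnonneg.antisymm (by simpa using dotProduct_self_star_nonneg (A *ᵥ x)))

open scoped MatrixOrder in
/-- Douglas' lemma. -/
theorem exists_contraction_factorization [DecidableEq m] [DecidableEq n] {A : Matrix k n ℝ}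
    {B : Matrix m n ℝ} (h : (Bᵀ * B - Aᵀ * A).PosSemidef) :
    ∃ F : Matrix n m ℝ, A * F * B = A ∧ (1 - (A * F)ᵀ * (A * F)).PosSemidef := by
  set C := Bᵀ * B
  set G := cfc (·⁻¹ : ℝ → ℝ) C
  have hC : C.PosSemidef := by simpa using posSemidef_conjTranspose_mul_self B
  have hG : IsPenroseInverse C G := isPenroseInverse_cfc_inv hC.isHermitian
  have hGt : Gᵀ = G := hG.transpose_eq_of_isSymm hC.isHermitian
  have hAGC : A * G * C = A :=
    mul_mul_eq_of_ker_le hG.mul_pinv_mul fun _ => mulVec_eq_zero_of_posSemidef_sub h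
  have hBGB : B * G * C * G * Bᵀ = B * G * Bᵀ := by
    rw [Matrix.mul_assoc B G C, Matrix.mul_assoc B (G * C) G, hG.pinv_mul_pinv]
  have hidem : B * G * Bᵀ * (B * G * Bᵀ) = B * G * Bᵀ := by
    conv_rhs => rw [← hBGB]
    simp only [C, Matrix.mul_assoc]
  have hsymm : (B * G * Bᵀ)ᵀ = B * G * Bᵀ := by
    rw [transpose_mul, transpose_mul, transpose_transpose, hGt, Matrix.mul_assoc]
  have hproj : IsStarProjection (B * G * Bᵀ) := ⟨hidem, IsHermitian.isSelfAdjoint hsymm⟩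
  refine ⟨G * Bᵀ, by simpa only [C, Matrix.mul_assoc] using hAGC, ?_⟩
  have hsplit : 1 - (A * (G * Bᵀ))ᵀ * (A * (G * Bᵀ)) =
      (1 - B * G * Bᵀ) + (G * Bᵀ)ᵀ * (C - Aᵀ * A) * (G * Bᵀ) := by
    have hGCG : (G * Bᵀ)ᵀ * C * (G * Bᵀ) = B * G * Bᵀ := by
      rw [transpose_mul, transpose_transpose, hGt]
      conv_rhs => rw [← hBGB]
      simp only [Matrix.mul_assoc]
    rw [Matrix.mul_sub, Matrix.sub_mul, hGCG]
    simp only [transpose_mul, Matrix.mul_assoc]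
    abel
  rw [hsplit]
  exact hproj.one_sub_nonneg.posSemidef.add (h.transpose_mul_mul_same _)

theorem exists_mul_eq_and_mul_eq [DecidableEq k] [DecidableEq n] {L : Matrix k k ℝ}
    (hL : L.IsHermitian) {W : Matrix m n ℝ} {X : Matrix k m ℝ} {Y : Matrix k n ℝ}
    (h : L * X * W = L * Y) (hW : IsUnit (Wᵀ * W).det ∨ IsUnit L.det) :
    ∃ V : Matrix k m ℝ, V * W = Y ∧ L * V = L * X := by
  rcases hW with hW | hL'
  · set G := cfc (·⁻¹ : ℝ → ℝ) L
    have hLGL : L * G * L = L := (isPenroseInverse_cfc_inv hL).mul_pinv_mul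
    set Z := Y * ((Wᵀ * W)⁻¹ * Wᵀ)
    refine ⟨G * L * X + (1 - G * L) * Z, ?_, ?_⟩
    · calc (G * L * X + (1 - G * L) * Z) * W
            = G * (L * X * W) + (1 - G * L) * (Y * ((Wᵀ * W)⁻¹ * (Wᵀ * W))) := by
              simp only [Z, Matrix.add_mul, Matrix.mul_assoc]
        _ = Y := by
              rw [h, nonsing_inv_mul _ hW, Matrix.mul_one, Matrix.sub_mul, Matrix.one_mul,
                Matrix.mul_assoc]
              abel
    · calc L * (G * L * X + (1 - G * L) * Z) = L * G * L * X + (L - L * G * L) * Z := by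
            simp only [Matrix.mul_add, Matrix.mul_sub, Matrix.sub_mul, Matrix.one_mul,
              Matrix.mul_assoc]
        _ = L * X := by rw [hLGL, sub_self, Matrix.zero_mul, add_zero]
  · refine ⟨X, ?_, rfl⟩
    simpa only [Matrix.mul_assoc, nonsing_inv_mul_cancel_left _ _ hL'] using congrArg (L⁻¹ * ·) h

open scoped MatrixOrder in
theorem exists_mul_eq_and_posSemidef_add [DecidableEq k] [DecidableEq m] [DecidableEq n]
    {S : Matrix m m ℝ} {D : Matrix k k ℝ} (hS : S.PosSemidef) (hD : (-D).PosSemidef)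
    {W : Matrix m n ℝ} {Y : Matrix k n ℝ} (hY : (Wᵀ * S * W + Yᵀ * D * Y).PosSemidef)
    (hW : IsUnit (Wᵀ * W).det ∨ IsUnit D.det) :
    ∃ V : Matrix k m ℝ, V * W = Y ∧ (S + Vᵀ * D * V).PosSemidef := by
  set T := CFC.sqrt S
  set L := CFC.sqrt (-D)
  have hL : L.IsHermitian := (CFC.sqrt_nonneg (-D)).posSemidef.isHermitian
  have hTT : Tᵀ * T = S := by
    rw [show Tᵀ = T from (CFC.sqrt_nonneg S).posSemidef.isHermitian]
    exact CFC.sqrt_mul_sqrt_self S hS.nonneg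
  have hLL : Lᵀ * L = -D := by
    rw [show Lᵀ = L from hL]
    exact CFC.sqrt_mul_sqrt_self (-D) hD.nonneg
  obtain ⟨F, hF, hK⟩ := exists_contraction_factorization (A := L * Y) (B := T * W) (by
    convert hY using 1
    rw [← hTT, ← neg_neg D, ← hLL]
    simp only [transpose_mul, Matrix.mul_neg, Matrix.neg_mul, Matrix.mul_assoc, sub_eq_add_neg])
  have hLdet : IsUnit (Wᵀ * W).det ∨ IsUnit L.det := by
    refine hW.imp_right fun hD => ?_
    have h : IsUnit (Lᵀ * L).det := by
      rw [hLL, det_neg]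
      exact (isUnit_neg_one.pow _).mul hD
    rw [det_mul, det_transpose] at h
    exact isUnit_of_mul_isUnit_left h
  obtain ⟨V, hVW, hLV⟩ := exists_mul_eq_and_mul_eq hL (X := Y * F * T)
    (by simpa only [Matrix.mul_assoc] using hF) hLdet
  refine ⟨V, hVW, ?_⟩
  have hsplit : S + Vᵀ * D * V = Tᵀ * (1 - (L * Y * F)ᵀ * (L * Y * F)) * T :=
    calc S + Vᵀ * D * V = Tᵀ * T - (L * V)ᵀ * (L * V) := by
          rw [hTT, ← neg_neg D, ← hLL]
          simp only [transpose_mul, Matrix.mul_neg, Matrix.neg_mul, Matrix.mul_assoc,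
            sub_eq_add_neg]
      _ = Tᵀ * (1 - (L * Y * F)ᵀ * (L * Y * F)) * T := by
          rw [hLV]
          simp only [Matrix.mul_sub, Matrix.sub_mul, Matrix.mul_one, transpose_mul,
            Matrix.mul_assoc]
  rw [hsplit]
  exact hK.transpose_mul_mul_same T

end Extension

theorem isUnit_det_of_rank_eq_card {n : Type*} [Fintype n] [DecidableEq n] {A : Matrix n n ℝ}
    (h : A.rank = Fintype.card n) : IsUnit A.det := by
  rw [← isUnit_iff_isUnit_det, ← mulVec_surjective_iff_isUnit, ← coe_mulVecLin,
    ← LinearMap.range_eq_top]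
  apply Submodule.eq_top_of_finrank_eq
  rw [← rank, h, Module.finrank_fintype_fun_eq_card]

theorem isSymm_toBlocks {m n : Type*} {P : Matrix (m ⊕ n) (m ⊕ n) ℝ} (hP : P.IsSymm) :
    P.toBlocks₁₁.IsSymm ∧ P.toBlocks₁₂ᵀ = P.toBlocks₂₁ ∧ P.toBlocks₂₁ᵀ = P.toBlocks₁₂ ∧
      P.toBlocks₂₂.IsSymm :=
  isSymm_fromBlocks_iff.mp (by rwa [fromBlocks_toBlocks])

theorem pinv_eq_of_isPenroseInverse {m n : ℕ} {A : Matrix (Fin m) (Fin n) ℝ}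
    {B : Matrix (Fin n) (Fin m) ℝ} (h : IsPenroseInverse A B) : pinv A = B := by
  have hex : ∃ B : Matrix (Fin n) (Fin m) ℝ,
      A * B * A = A ∧ B * A * B = B ∧ (A * B)ᵀ = A * B ∧ (B * A)ᵀ = B * A :=
    ⟨B, h.mul_pinv_mul, h.pinv_mul_pinv, h.transpose_mul_pinv, h.transpose_pinv_mul⟩
  obtain ⟨h1, h2, h3, h4⟩ := hex.choose_spec
  rw [pinv, dif_pos hex]
  exact IsPenroseInverse.eq ⟨h1, h2, h3, h4⟩ h

theorem isPenroseInverse_pinv {n : ℕ} {A : Matrix (Fin n) (Fin n) ℝ} (hA : A.IsSymm) :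
    IsPenroseInverse A (pinv A) := by
  have h := isPenroseInverse_cfc_inv hA
  rwa [← pinv_eq_of_isPenroseInverse h] at h

theorem qmi_eq {q r : ℕ} (P : Matrix (Fin q ⊕ Fin r) (Fin q ⊕ Fin r) ℝ)
    (Z : Matrix (Fin r) (Fin q) ℝ) :
    qmi P Z = P.toBlocks₁₁ + P.toBlocks₁₂ * Z + Zᵀ * P.toBlocks₂₁ + Zᵀ * P.toBlocks₂₂ * Z := by
  -- the body of `qmi` multiplies through the `CStarMatrix` instance; restating it fixes that
  set I := fromRows (1 : Matrix (Fin q) (Fin q) ℝ) Z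
  have h : qmi P Z = Iᵀ * P * I := rfl
  rw [h, ← fromBlocks_toBlocks P, transpose_fromRows, transpose_one, fromCols_mul_fromBlocks,
    fromCols_mul_fromRows]
  simp only [Matrix.one_mul, Matrix.mul_one, Matrix.add_mul, Matrix.mul_assoc,
    toBlocks_fromBlocks₁₁, toBlocks_fromBlocks₁₂, toBlocks_fromBlocks₂₁, toBlocks_fromBlocks₂₂]
  abel

theorem qmi_eq_schurC_add {q r : ℕ} {P : Matrix (Fin q ⊕ Fin r) (Fin q ⊕ Fin r) ℝ}
    (hP : P.IsSymm) (hker : ∀ x, P.toBlocks₂₂ *ᵥ x = 0 → P.toBlocks₁₂ *ᵥ x = 0)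
    (Z : Matrix (Fin r) (Fin q) ℝ) :
    qmi P Z = schurC P + (Z + pinv P.toBlocks₂₂ * P.toBlocks₂₁)ᵀ * P.toBlocks₂₂ *
      (Z + pinv P.toBlocks₂₂ * P.toBlocks₂₁) := by
  obtain ⟨-, h12, h21, h22⟩ := isSymm_toBlocks hP
  set G := pinv P.toBlocks₂₂
  have hG := isPenroseInverse_pinv h22
  have hGt : Gᵀ = G := hG.transpose_eq_of_isSymm h22
  have h12G : P.toBlocks₁₂ * G * P.toBlocks₂₂ = P.toBlocks₁₂ :=
    mul_mul_eq_of_ker_le hG.mul_pinv_mul hker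
  have h12G' (X : Matrix (Fin r) (Fin q) ℝ) :
      P.toBlocks₁₂ * (G * (P.toBlocks₂₂ * X)) = P.toBlocks₁₂ * X := by
    rw [← Matrix.mul_assoc, ← Matrix.mul_assoc, h12G]
  have hG21 : P.toBlocks₂₂ * (G * P.toBlocks₂₁) = P.toBlocks₂₁ := by
    have h := congrArg transpose h12G
    rwa [transpose_mul, transpose_mul, h22.eq, hGt, h12] at h
  rw [qmi_eq, schurC, transpose_add, transpose_mul, hGt, h21]
  simp only [Matrix.add_mul, Matrix.mul_add, Matrix.mul_assoc, h12G', hG21]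
  abel

noncomputable def piW {q r p : ℕ} (P : Matrix (Fin q ⊕ Fin r) (Fin q ⊕ Fin r) ℝ)
    (W : Matrix (Fin q) (Fin p) ℝ) : Matrix (Fin p ⊕ Fin r) (Fin p ⊕ Fin r) ℝ :=
  fromBlocks (Wᵀ * P.toBlocks₁₁ * W) (Wᵀ * P.toBlocks₁₂) (P.toBlocks₂₁ * W) P.toBlocks₂₂

section piW

variable {q r p : ℕ} {P : Matrix (Fin q ⊕ Fin r) (Fin q ⊕ Fin r) ℝ}
  {W : Matrix (Fin q) (Fin p) ℝ}

theorem qmi_piW_mul (Z : Matrix (Fin r) (Fin q) ℝ) :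
    qmi (piW P W) (Z * W) = Wᵀ * qmi P Z * W := by
  simp only [qmi_eq, piW, toBlocks_fromBlocks₁₁, toBlocks_fromBlocks₁₂, toBlocks_fromBlocks₂₁,
    toBlocks_fromBlocks₂₂, transpose_mul, Matrix.mul_add, Matrix.add_mul, Matrix.mul_assoc]

theorem isSymm_piW (hP : P.IsSymm) : (piW P W).IsSymm := by
  obtain ⟨h11, h12, -, h22⟩ := isSymm_toBlocks hP
  refine IsSymm.fromBlocks ?_ ?_ h22
  · simp [IsSymm, transpose_mul, h11.eq, Matrix.mul_assoc]
  · rw [transpose_mul, transpose_transpose, h12]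

theorem schurC_piW : schurC (piW P W) = Wᵀ * schurC P * W := by
  simp only [schurC, piW, toBlocks_fromBlocks₁₁, toBlocks_fromBlocks₁₂, toBlocks_fromBlocks₂₁,
    toBlocks_fromBlocks₂₂, Matrix.mul_sub, Matrix.sub_mul, Matrix.mul_assoc]

theorem image_mul_subset_ZrSet_piW : (· * W) '' ZrSet P ⊆ ZrSet (piW P W) := by
  rintro _ ⟨Z, hZ, rfl⟩
  show (qmi _ _).PosSemidef
  rw [qmi_piW_mul]
  exact hZ.transpose_mul_mul_same W

theorem ZrSet_piW_subset_image (hP : memPi P)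
    (hW : IsUnit (Wᵀ * W).det ∨ IsUnit P.toBlocks₂₂.det) :
    ZrSet (piW P W) ⊆ (· * W) '' ZrSet P := by
  obtain ⟨hsymm, hD, hS, hker⟩ := hP
  have hkerW (x : Fin r → ℝ) (hx : P.toBlocks₂₂ *ᵥ x = 0) : (Wᵀ * P.toBlocks₁₂) *ᵥ x = 0 := by
    rw [← mulVec_mulVec, hker x hx, mulVec_zero]
  intro Y hY
  change (qmi (piW P W) Y).PosSemidef at hY
  rw [qmi_eq_schurC_add (isSymm_piW hsymm) hkerW, schurC_piW] at hY
  simp only [piW, toBlocks_fromBlocks₂₁, toBlocks_fromBlocks₂₂] at hY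
  obtain ⟨V, hVW, hV⟩ := exists_mul_eq_and_posSemidef_add hS hD hY hW
  refine ⟨V - pinv P.toBlocks₂₂ * P.toBlocks₂₁, ?_, ?_⟩
  · show (qmi P _).PosSemidef
    rwa [qmi_eq_schurC_add hsymm hker, sub_add_cancel]
  · show (V - _) * W = Y
    rw [Matrix.sub_mul, hVW, Matrix.mul_assoc, add_sub_cancel_right]

end piW

/-- Projection result. For `Π ∈ Π_{q,r}` and `W ∈ ℝ^{q×p}`,
`Z_r(Π)·W ⊆ Z_r(Π_W)`; and if `W` has full column rank or `Π₂₂` is nonsingular,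
then `Z_r(Π)·W = Z_r(Π_W)`. -/
theorem stmt_7 {q r p : ℕ} (P : Matrix (Fin q ⊕ Fin r) (Fin q ⊕ Fin r) ℝ)
    (W : Matrix (Fin q) (Fin p) ℝ) (hP : memPi P) :
    (fun Z => Z * W) '' ZrSet P ⊆
      ZrSet (fromBlocks (Wᵀ * P.toBlocks₁₁ * W) (Wᵀ * P.toBlocks₁₂)
        (P.toBlocks₂₁ * W) P.toBlocks₂₂) ∧
    ((W.rank = p ∨ IsUnit P.toBlocks₂₂.det) →
      (fun Z => Z * W) '' ZrSet P =
        ZrSet (fromBlocks (Wᵀ * P.toBlocks₁₁ * W) (Wᵀ * P.toBlocks₁₂)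
          (P.toBlocks₂₁ * W) P.toBlocks₂₂)) := by
  refine ⟨image_mul_subset_ZrSet_piW, fun hW =>
    image_mul_subset_ZrSet_piW.antisymm (ZrSet_piW_subset_image hP (hW.imp_left fun h => ?_))⟩
  exact isUnit_det_of_rank_eq_card (by rw [rank_transpose_mul_self, h, Fintype.card_fin])
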